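/- arXiv:0804.3069 — 2 statements merged into one kernel-verified Lean document; each statement's English description precedes it below -/
import Mathlib

section
/- Let T be a bounded self-adjoint operator on a complex Hilbert space H, U an open neighborhood of σ(T) with (−L, L)·U ⊆ U for some L > 0, and F : U → ℂ analytic. Then the map t ↦ F(tT) from (−L, L) to B(H) is differentiable in operator norm, with derivative d/dt F(tT) = T · F'(tT), where F' = dF/dλ and both F(tT) and F'(tT) are given by the continuous functional calculus of tT. -/
/-!
By `cfc_comp_const_mul`, `cfc F (s • T) = cfc (fun λ => F (s * λ)) T`, and the continuous
functional calculus turns uniform convergence on `σ(T)` into norm convergence. It therefore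
suffices that the difference quotients of `s ↦ F (s * λ)` converge to `λ * F' (t * λ)`
uniformly in `λ ∈ σ(T)`. This follows from the mean value inequality, because
`(s, λ) ↦ λ * F' (s * λ)` is jointly continuous and `σ(T)` is compact.
-/

open Filter Topology Function Set

theorem Convex.norm_image_sub_sub_smul_le {E : Type*} [NormedAddCommGroup E] [NormedSpace ℝ E]
    {f f' : ℝ → E} {s : Set ℝ} {a b C : ℝ} (hs : Convex ℝ s)
    (hf : ∀ u ∈ s, HasDerivWithinAt f (f' u) s u) (bound : ∀ u ∈ s, ‖f' u - f' a‖ ≤ C)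
    (ha : a ∈ s) (hb : b ∈ s) : ‖f b - f a - (b - a) • f' a‖ ≤ C * ‖b - a‖ := by
  have hlin : ∀ u ∈ s, HasDerivWithinAt (fun v => f v - (v - a) • f' a) (f' u - f' a) s u :=
    fun u hu => (hf u hu).sub <| by
      simpa using ((hasDerivWithinAt_id u s).sub_const a).smul_const (f' a)
  simpa [sub_right_comm] using hs.norm_image_sub_le_of_norm_hasDerivWithin_le hlin bound ha hb

theorem tendstoUniformlyOn_slope_of_continuousOn_deriv
    {X E : Type*} [TopologicalSpace X] [NormedAddCommGroup E] [NormedSpace ℝ E]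
    {f f' : ℝ → X → E} {S : Set ℝ} {K : Set X} {t : ℝ} (hS : S ∈ 𝓝 t) (hK : IsCompact K)
    (hderiv : ∀ u ∈ S, ∀ x ∈ K, HasDerivAt (f · x) (f' u x) u)
    (hcont : ContinuousOn (uncurry f') (S ×ˢ K)) :
    TendstoUniformlyOn (fun s x => (s - t)⁻¹ • (f s x - f t x)) (f' t) (𝓝[≠] t) K := by
  rw [Metric.tendstoUniformlyOn_iff]
  intro ε hε
  obtain ⟨V, hV, hclose⟩ := hK.mem_uniformity_of_prod hcont (mem_of_mem_nhds hS)
    (Metric.dist_mem_uniformity (half_pos hε))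
  rw [nhdsWithin_eq_nhds.mpr hS] at hV
  obtain ⟨r, hr, hball⟩ := Metric.mem_nhds_iff.mp (inter_mem hS hV)
  filter_upwards [nhdsWithin_le_nhds (Metric.ball_mem_nhds t hr), self_mem_nhdsWithin]
    with s hs hst x hx
  have hst : s - t ≠ 0 := sub_ne_zero.mpr hst
  have hmvt : ‖f s x - f t x - (s - t) • f' t x‖ ≤ ε / 2 * ‖s - t‖ :=
    (convex_ball t r).norm_image_sub_sub_smul_le
      (fun u hu => (hderiv u (hball hu).1 x hx).hasDerivWithinAt)
      (fun u hu => le_of_lt (by simpa [dist_eq_norm] using hclose u (hball hu).2 x hx))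
      (Metric.mem_ball_self hr) hs
  calc dist (f' t x) ((s - t)⁻¹ • (f s x - f t x))
      = ‖s - t‖⁻¹ * ‖f s x - f t x - (s - t) • f' t x‖ := by
        rw [dist_eq_norm, ← norm_inv, ← norm_smul, smul_sub _ (f s x - f t x), smul_smul,
          inv_mul_cancel₀ hst, one_smul, norm_sub_rev]
    _ ≤ ‖s - t‖⁻¹ * (ε / 2 * ‖s - t‖) := by gcongr
    _ < ε := by
        rw [mul_left_comm, inv_mul_cancel₀ (norm_ne_zero_iff.mpr hst)]
        linarith

theorem hasDerivAt_cfc_of_tendstoUniformlyOn_slope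
    {𝕜 A : Type*} {p : A → Prop} [RCLike 𝕜] [NormedRing A] [StarRing A] [NormedAlgebra 𝕜 A]
    [NormedSpace ℝ A] [IsScalarTower ℝ 𝕜 A] [ContinuousFunctionalCalculus 𝕜 A p]
    {g : ℝ → 𝕜 → 𝕜} {g' : 𝕜 → 𝕜} {a : A} {t : ℝ}
    (hslope : TendstoUniformlyOn (fun s x => (s - t)⁻¹ • (g s x - g t x)) g' (𝓝[≠] t)
      (spectrum 𝕜 a))
    (hg : ∀ᶠ s in 𝓝 t, ContinuousOn (g s) (spectrum 𝕜 a)) :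
    HasDerivAt (fun s => cfc (g s) a) (cfc g' a) t := by
  have hgt : ContinuousOn (g t) (spectrum 𝕜 a) := hg.self_of_nhds
  have hg' : ∀ᶠ s in 𝓝[≠] t, ContinuousOn (g s) (spectrum 𝕜 a) := nhdsWithin_le_nhds hg
  rw [hasDerivAt_iff_tendsto_slope]
  refine (tendsto_cfc_fun hslope (hg'.mono fun s hs => ?_)).congr' ?_
  · exact continuousOn_const.smul (hs.sub hgt)
  · filter_upwards [hg'] with s hs
    rw [slope_def_module, cfc_smul (f := fun x => g s x - g t x) _ _ (hs.sub hgt),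
      cfc_sub _ _ _ hs hgt]

theorem HasDerivAt.comp_ofReal_mul_const {F : ℂ → ℂ} {F' x : ℂ} {u : ℝ}
    (hF : HasDerivAt F F' (u * x)) : HasDerivAt (fun s : ℝ => F (s * x)) (x * F') u := by
  simpa [mul_comm] using (hF.comp (u : ℂ) ((hasDerivAt_id (u : ℂ)).mul_const x)).comp_ofReal

theorem hasDerivAt_cfc_scaled_general
    {H : Type*} [NormedAddCommGroup H] [InnerProductSpace ℂ H] [CompleteSpace H]
    (T : H →L[ℂ] H) (hT : IsSelfAdjoint T)
    (U : Set ℂ) (hU : IsOpen U) (hspec : spectrum ℂ T ⊆ U)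
    (L : ℝ)
    (hscale : ∀ t ∈ Set.Ioo (-L) L, ∀ z ∈ U, (t : ℂ) * z ∈ U)
    (F : ℂ → ℂ) (hF : AnalyticOn ℂ F U) :
    ∀ t ∈ Set.Ioo (-L) L,
      HasDerivAt (fun s : ℝ => cfc F ((s : ℂ) • T))
        (T * cfc (deriv F) ((t : ℂ) • T)) t := by
  intro t ht
  have hnormal : IsStarNormal T := hT.isStarNormal
  have hFU : AnalyticOnNhd ℂ F U := hU.analyticOn_iff_analyticOnNhd.mp hF
  have hIoo : Ioo (-L) L ∈ 𝓝 t := isOpen_Ioo.mem_nhds ht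
  have hmaps : MapsTo (fun p : ℝ × ℂ => (p.1 : ℂ) * p.2) (Ioo (-L) L ×ˢ spectrum ℂ T) U :=
    fun p hp => hscale p.1 hp.1 p.2 (hspec hp.2)
  have hmaps' : ∀ s ∈ Ioo (-L) L, MapsTo ((s : ℂ) * ·) (spectrum ℂ T) U :=
    fun s hs x hx => hmaps (x := (s, x)) ⟨hs, hx⟩
  have hcfc_smul : ∀ s ∈ Ioo (-L) L, ∀ G : ℂ → ℂ, ContinuousOn G U →
      cfc G ((s : ℂ) • T) = cfc (fun x => G (s * x)) T := fun s hs G hG =>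
    (cfc_comp_const_mul _ G T (hG.mono (hmaps' s hs).image_subset)).symm
  have hderiv : T * cfc (deriv F) ((t : ℂ) • T) = cfc (fun x => x * deriv F (t * x)) T := by
    rw [hcfc_smul t ht _ hFU.deriv.continuousOn, cfc_mul (fun x => x) (fun x => deriv F (t * x)) T
      (continuousOn_id' _) (hFU.deriv.continuousOn.comp (by fun_prop) (hmaps' t ht)), cfc_id' ℂ T]
  rw [hderiv]
  refine HasDerivAt.congr_of_eventuallyEq ?_
    (eventually_of_mem hIoo fun s hs => hcfc_smul s hs F hFU.continuousOn)
  refine hasDerivAt_cfc_of_tendstoUniformlyOn_slope ?_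
    (eventually_of_mem hIoo fun s hs => hFU.continuousOn.comp (by fun_prop) (hmaps' s hs))
  refine tendstoUniformlyOn_slope_of_continuousOn_deriv hIoo (spectrum.isCompact T)
    (fun u hu x hx => (hFU _ (hmaps' u hu hx)).differentiableAt.hasDerivAt.comp_ofReal_mul_const)
    ?_
  exact continuousOn_snd.mul (hFU.deriv.continuousOn.comp (by fun_prop) hmaps)

/-- With `T` bounded self-adjoint, `U ⊇ σ(T)` open with
`(−L,L)·U ⊆ U`, and `F` analytic on `U`, the map `t ↦ F(tT)` is differentiable
in operator norm on `(−L, L)` with derivative `T · F'(tT)`. -/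
theorem hasDerivAt_cfc_scaled
    {H : Type*} [NormedAddCommGroup H] [InnerProductSpace ℂ H] [CompleteSpace H]
    (T : H →L[ℂ] H) (hT : IsSelfAdjoint T)
    (U : Set ℂ) (hU : IsOpen U) (hspec : spectrum ℂ T ⊆ U)
    (L : ℝ) (hL : 0 < L)
    (hscale : ∀ t ∈ Set.Ioo (-L) L, ∀ z ∈ U, (t : ℂ) * z ∈ U)
    (F : ℂ → ℂ) (hF : AnalyticOn ℂ F U) :
    ∀ t ∈ Set.Ioo (-L) L,
      HasDerivAt (fun s : ℝ => cfc F ((s : ℂ) • T))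
        (T * cfc (deriv F) ((t : ℂ) • T)) t :=
  hasDerivAt_cfc_scaled_general T hT U hU hspec L hscale F hF
end

section
/- Let T be a bounded self-adjoint operator on a complex Hilbert space H, U an open neighborhood of σ(T) with (−L, L)·U ⊆ U, and F : U → ℂ analytic. Then for all u₁, u₂ ∈ (−L, L), T · ∫_{u₁}^{u₂} F'(tT) dt = F(u₂T) − F(u₁T), where the integral is the Bochner integral in B(H) of the norm-continuous map t ↦ F'(tT). -/
/-!
Under the functional calculus the Newton–Leibniz identity becomes, pointwise on the spectrum, the scalar
fundamental theorem of calculus `z * ∫ t in u₁..u₂, F' (t * z) = F (u₂ * z) - F (u₁ * z)`.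
The integral commutes with the calculus because `(t, z) ↦ F' (t * z)` is continuous on the
compact set `[[u₁, u₂]] ×ˢ σ(a)`, and multiplying by `a` is multiplying by the identity function.
-/

open Set Function MeasureTheory intervalIntegral

theorem continuousOn_parametric_intervalIntegral_of_continuousOn
    {X E : Type*} [TopologicalSpace X] [NormedAddCommGroup E] [NormedSpace ℝ E] {f : ℝ → X → E} {s : Set X} {a b : ℝ}
    (hf : ContinuousOn (uncurry f) (uIcc a b ×ˢ s)) :
    ContinuousOn (fun x => ∫ t in a..b, f t x) s := by
  rw [continuousOn_iff_continuous_domRestrict]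
  -- Clamping the parameter to `[[a, b]]` makes the integrand jointly continuous everywhere.
  let clamp : s × ℝ → ℝ × X := fun q => (projIcc (a ⊓ b) (a ⊔ b) inf_le_sup q.2, q.1)
  let g : s → ℝ → E := fun x t => uncurry f (clamp (x, t))
  have hg : Continuous (uncurry g) :=
    hf.comp_continuous (by fun_prop) fun q => ⟨(projIcc (a ⊓ b) (a ⊔ b) inf_le_sup q.2).2, q.1.2⟩
  refine (continuous_parametric_intervalIntegral_of_continuous' hg a b).congr fun x =>
    integral_congr fun t ht => ?_
  simp only [g, clamp, uncurry, projIcc_of_mem inf_le_sup ht]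

theorem cfc_intervalIntegral {𝕜 A : Type*} {p : A → Prop} [RCLike 𝕜] [NormedRing A]
    [StarRing A] [NormedAlgebra 𝕜 A] [ContinuousFunctionalCalculus 𝕜 A p] [CompleteSpace A]
    [NormedSpace ℝ A] (f : ℝ → 𝕜 → 𝕜) (a b : ℝ) (x : A)
    (hf : ContinuousOn (uncurry f) (uIcc a b ×ˢ spectrum 𝕜 x)) (hx : p x := by cfc_tac) :
    cfc (fun z => ∫ t in a..b, f t z) x = ∫ t in a..b, cfc (f t) x := by
  wlog hab : a ≤ b generalizing a b
  · rw [uIcc_comm] at hf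
    simp only [integral_symm b a]
    rw [cfc_neg, this b a hf (le_of_not_ge hab)]
  rw [uIcc_of_le hab] at hf
  obtain ⟨C, hC⟩ := (isCompact_Icc.prod (spectrum.isCompact x)).exists_bound_of_continuousOn hf
  simp only [integral_of_le hab]
  exact cfc_setIntegral measurableSet_Ioc f (fun _ => C) x
    (hf.mono (prod_mono Ioc_subset_Icc_self subset_rfl))
    (ae_restrict_of_forall_mem measurableSet_Ioc fun t ht z hz =>
      hC (t, z) ⟨Ioc_subset_Icc_self ht, hz⟩)
    (hasFiniteIntegral_const C)

theorem integral_mul_deriv_comp_ofReal_mul {F : ℂ → ℂ} {z : ℂ} {a b : ℝ}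
    (hF : ∀ t ∈ uIcc a b, DifferentiableAt ℂ F (t * z))
    (hF' : ContinuousOn (fun t : ℝ => deriv F (t * z)) (uIcc a b)) :
    ∫ t in a..b, z * deriv F (t * z) = F (b * z) - F (a * z) := by
  refine integral_eq_sub_of_hasDerivAt (f := fun t : ℝ => F (t * z)) (fun t ht => ?_)
    (continuousOn_const.mul hF').intervalIntegrable
  have h := ((hF t ht).hasDerivAt.comp (t : ℂ) ((hasDerivAt_id _).mul_const z)).comp_ofReal
  simpa [mul_comm] using h

theorem mul_intervalIntegral_cfc_deriv_eq_sub {A : Type*} {p : A → Prop} [NormedRing A]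
    [StarRing A] [NormedAlgebra ℂ A] [ContinuousFunctionalCalculus ℂ A p] [CompleteSpace A]
    [NormedSpace ℝ A] (a : A) {U : Set ℂ} {F : ℂ → ℂ} (hF : AnalyticOnNhd ℂ F U) {u₁ u₂ : ℝ}
    (hmaps : ∀ t ∈ uIcc u₁ u₂, MapsTo ((t : ℂ) * ·) (spectrum ℂ a) U) (ha : p a := by cfc_tac) :
    a * ∫ t in u₁..u₂, cfc (deriv F) ((t : ℂ) • a) =
      cfc F ((u₂ : ℂ) • a) - cfc F ((u₁ : ℂ) • a) := by
  have hF'cont : ContinuousOn (uncurry fun (t : ℝ) (z : ℂ) => deriv F (t * z))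
      (uIcc u₁ u₂ ×ˢ spectrum ℂ a) :=
    hF.deriv.continuousOn.comp (by fun_prop) fun q hq => hmaps q.1 hq.1 hq.2
  have hFcont : ∀ t ∈ uIcc u₁ u₂, ContinuousOn F (((t : ℂ) * ·) '' spectrum ℂ a) :=
    fun t ht => hF.continuousOn.mono (hmaps t ht).image_subset
  have hFcomp : ∀ t ∈ uIcc u₁ u₂, ContinuousOn (fun z => F (t * z)) (spectrum ℂ a) :=
    fun t ht => (hFcont t ht).comp (continuousOn_const.mul continuousOn_id) (mapsTo_image _ _)
  calc a * ∫ t in u₁..u₂, cfc (deriv F) ((t : ℂ) • a)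
      = a * ∫ t in u₁..u₂, cfc (fun z => deriv F (t * z)) a := by
        congr 1
        exact integral_congr fun t ht => (cfc_comp_const_mul _ _ _
          (hF.deriv.continuousOn.mono (hmaps t ht).image_subset) ha).symm
    _ = a * cfc (fun z => ∫ t in u₁..u₂, deriv F (t * z)) a := by
        rw [cfc_intervalIntegral _ _ _ _ hF'cont]
    _ = cfc (fun z => z * ∫ t in u₁..u₂, deriv F (t * z)) a := by
        rw [cfc_mul (fun z : ℂ => z) _ a continuousOn_id
          (continuousOn_parametric_intervalIntegral_of_continuousOn hF'cont), cfc_id' ℂ a]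
    _ = cfc (fun z => F (u₂ * z) - F (u₁ * z)) a := cfc_congr fun z hz => by
        rw [← intervalIntegral.integral_const_mul]
        exact integral_mul_deriv_comp_ofReal_mul
          (fun t ht => (hF _ (hmaps t ht hz)).differentiableAt)
          (hF'cont.comp (Continuous.continuousOn (by fun_prop : Continuous fun t : ℝ => (t, z)))
            fun t ht => ⟨ht, hz⟩)
    _ = cfc F ((u₂ : ℂ) • a) - cfc F ((u₁ : ℂ) • a) := by
        rw [cfc_sub _ _ a (hFcomp u₂ right_mem_uIcc) (hFcomp u₁ left_mem_uIcc),
          cfc_comp_const_mul _ _ _ (hFcont u₂ right_mem_uIcc),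
          cfc_comp_const_mul _ _ _ (hFcont u₁ left_mem_uIcc)]

theorem newton_leibnitz_cfc_general
    {H : Type*} [NormedAddCommGroup H] [InnerProductSpace ℂ H] [CompleteSpace H]
    (T : H →L[ℂ] H) (hT : IsSelfAdjoint T)
    (U : Set ℂ) (hU : IsOpen U) (hspec : spectrum ℂ T ⊆ U)
    (L : ℝ)
    (hscale : ∀ t ∈ Set.Ioo (-L) L, ∀ z ∈ U, (t : ℂ) * z ∈ U)
    (F : ℂ → ℂ) (hF : AnalyticOn ℂ F U) :
    ∀ u₁ ∈ Set.Ioo (-L) L, ∀ u₂ ∈ Set.Ioo (-L) L,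
      T * (∫ t in u₁..u₂, cfc (deriv F) ((t : ℂ) • T)) =
        cfc F ((u₂ : ℂ) • T) - cfc F ((u₁ : ℂ) • T) := by
  intro u₁ hu₁ u₂ hu₂
  have hmaps : ∀ t ∈ uIcc u₁ u₂, MapsTo ((t : ℂ) * ·) (spectrum ℂ T) U := fun t ht z hz =>
    hscale t (ordConnected_Ioo.uIcc_subset hu₁ hu₂ ht) z (hspec hz)
  exact mul_intervalIntegral_cfc_deriv_eq_sub T (hU.analyticOn_iff_analyticOnNhd.mp hF) hmaps
    hT.isStarNormal

/-- With `T` bounded self-adjoint, `U ⊇ σ(T)` open with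
`(−L,L)·U ⊆ U`, and `F` analytic on `U`, the Newton–Leibnitz formula
`T · ∫_{u₁}^{u₂} F'(tT) dt = F(u₂T) − F(u₁T)` holds for all `u₁, u₂ ∈ (−L, L)`,
the integral being the Bochner integral in `B(H)`. -/
theorem newton_leibnitz_cfc
    {H : Type*} [NormedAddCommGroup H] [InnerProductSpace ℂ H] [CompleteSpace H]
    (T : H →L[ℂ] H) (hT : IsSelfAdjoint T)
    (U : Set ℂ) (hU : IsOpen U) (hspec : spectrum ℂ T ⊆ U)
    (L : ℝ) (hL : 0 < L)
    (hscale : ∀ t ∈ Set.Ioo (-L) L, ∀ z ∈ U, (t : ℂ) * z ∈ U)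
    (F : ℂ → ℂ) (hF : AnalyticOn ℂ F U) :
    ∀ u₁ ∈ Set.Ioo (-L) L, ∀ u₂ ∈ Set.Ioo (-L) L,
      T * (∫ t in u₁..u₂, cfc (deriv F) ((t : ℂ) • T)) =
        cfc F ((u₂ : ℂ) • T) - cfc F ((u₁ : ℂ) • T) :=
  newton_leibnitz_cfc_general T hT U hU hspec L hscale F hF
end
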